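/- With the same setup, the second moment of the single-shot estimator satisfies E(ν²) = Σ_{P,Q} α_P α_Q g(P,Q,β) Tr(PQ ρ), where g(P,Q,β) = (1/ζ(P,β))(1/ζ(Q,β)) Σ_{B ∈ Lift(P) ∩ Lift(Q)} β(B), given that for B ∈ Lift(P) ∩ Lift(Q) one has E_{μ(B)}[μ(B,supp(P)) μ(B,supp(Q))] = Tr(PQ ρ). -/

import Mathlib

/-- Single-qubit Pauli operators {I, X, Y, Z}. -/
inductive PauliOp : Type
  | I | X | Y | Z
deriving DecidableEq

instance : Fintype PauliOp :=
  ⟨{PauliOp.I, PauliOp.X, PauliOp.Y, PauliOp.Z}, fun x => by cases x <;> simp⟩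

/-- Single-qubit measurement bases 𝒫 = {X, Y, Z} (traceless Paulis). -/
inductive PauliBasis : Type
  | X | Y | Z
deriving DecidableEq

instance : Fintype PauliBasis :=
  ⟨{PauliBasis.X, PauliBasis.Y, PauliBasis.Z}, fun x => by cases x <;> simp⟩

instance : Inhabited PauliBasis := ⟨PauliBasis.X⟩

def PauliBasis.toPauli : PauliBasis → PauliOp
  | .X => .X
  | .Y => .Y
  | .Z => .Z

/-- The (non-identity) Pauli as a basis; junk value `X` on `I`. -/
def PauliOp.toBasis : PauliOp → PauliBasis
  | .I => .X
  | .X => .X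
  | .Y => .Y
  | .Z => .Z

/-- `Lift P`: measurement bases `B ∈ 𝒫^n` with `B_i = P_i` whenever `P_i ≠ I`. -/
def Lift {n : ℕ} (P : Fin n → PauliOp) : Finset (Fin n → PauliBasis) :=
  Finset.univ.filter fun B => ∀ i, P i ≠ PauliOp.I → (B i).toPauli = P i

/-- Support of a Pauli operator: qubits where it is not the identity. -/
def psupp {n : ℕ} (P : Fin n → PauliOp) : Finset (Fin n) :=
  Finset.univ.filter fun i => P i ≠ PauliOp.I

/-- ζ(P,β) = Σ_{B ∈ Lift(P)} β(B). -/
def zeta {n : ℕ} (P : Fin n → PauliOp) (β : (Fin n → PauliBasis) → ℝ) : ℝ :=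
  ∑ B ∈ Lift P, β B

section IndicatorSums

variable {ι : Type*} [Fintype ι] [DecidableEq ι]

theorem sum_indicator_mul_indicator_mul (s t : Finset ι) (g : ι → ℝ) :
    ∑ i, (if i ∈ s then (1:ℝ) else 0) * (if i ∈ t then 1 else 0) * g i = ∑ i ∈ s ∩ t, g i := by
  simp only [ite_mul, one_mul, zero_mul, Finset.sum_ite_mem, Finset.univ_inter]

theorem sum_mul_indicator_div_mul_indicator_div (β f : ι → ℝ) (s t : Finset ι) (a x y e : ℝ)
    (hf : ∀ i ∈ s ∩ t, f i = e) :
    ∑ i, β i * (a * ((if i ∈ s then (1:ℝ) else 0) / x) * ((if i ∈ t then (1:ℝ) else 0) / y)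
        * f i)
      = a * ((∑ i ∈ s ∩ t, β i) / (x * y)) * e := by
  calc ∑ i, β i * (a * ((if i ∈ s then (1:ℝ) else 0) / x) * ((if i ∈ t then (1:ℝ) else 0) / y)
          * f i)
      = a / (x * y) * ∑ i, (if i ∈ s then (1:ℝ) else 0) * (if i ∈ t then 1 else 0)
          * (β i * f i) := by
        rw [Finset.mul_sum]
        exact Finset.sum_congr rfl fun i _ => by ring
    _ = a / (x * y) * ∑ i ∈ s ∩ t, β i * e := by
        rw [sum_indicator_mul_indicator_mul]
        exact congrArg _ (Finset.sum_congr rfl fun i hi => by rw [hf i hi])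
    _ = a * ((∑ i ∈ s ∩ t, β i) / (x * y)) * e := by
        rw [← Finset.sum_mul]
        ring

end IndicatorSums

/-- `trPQ P Q` stands for Tr(PQρ) and `Eμ2 B A A'` for E_{μ(B)}[μ(B,A) μ(B,A')]. -/
theorem statement1_general {n : ℕ} (β : (Fin n → PauliBasis) → ℝ)
    (α : (Fin n → PauliOp) → ℝ)
    (trPQ : (Fin n → PauliOp) → (Fin n → PauliOp) → ℝ)
    (Eμ2 : (Fin n → PauliBasis) → Finset (Fin n) → Finset (Fin n) → ℝ)
    (hEμ2 : ∀ (P Q : Fin n → PauliOp), ∀ B ∈ Lift P ∩ Lift Q,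
        Eμ2 B (psupp P) (psupp Q) = trPQ P Q) :
    ∑ B, β B * ∑ P, ∑ Q,
        α P * α Q * ((if B ∈ Lift P then (1:ℝ) else 0) / zeta P β)
          * ((if B ∈ Lift Q then (1:ℝ) else 0) / zeta Q β)
          * Eμ2 B (psupp P) (psupp Q)
      = ∑ P, ∑ Q, α P * α Q *
          ((∑ B ∈ Lift P ∩ Lift Q, β B) / (zeta P β * zeta Q β)) * trPQ P Q := by
  simp only [Finset.mul_sum]
  rw [Finset.sum_comm]
  refine Finset.sum_congr rfl fun P _ => ?_
  rw [Finset.sum_comm]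
  exact Finset.sum_congr rfl fun Q _ =>
    sum_mul_indicator_div_mul_indicator_div β _ _ _ _ _ _ _ (hEμ2 P Q)

/-- Second moment of the single-shot estimator:
E(ν²) = Σ_{P,Q} α_P α_Q g(P,Q,β) Tr(PQρ), where
g(P,Q,β) = (Σ_{B ∈ Lift P ∩ Lift Q} β(B)) / (ζ(P,β) ζ(Q,β)).
`trPQ P Q` stands for Tr(PQρ) and `Eμ2 B A A'` abstracts
E_{μ(B)}[μ(B,A) μ(B,A')], with E_{μ(B)}[μ(B,supp P) μ(B,supp Q)] = Tr(PQρ)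
whenever B ∈ Lift P ∩ Lift Q. -/
theorem statement1 {n : ℕ} (β : (Fin n → PauliBasis) → ℝ)
    (α : (Fin n → PauliOp) → ℝ)
    (trPQ : (Fin n → PauliOp) → (Fin n → PauliOp) → ℝ)
    (hβ0 : ∀ B, 0 ≤ β B) (hβ1 : ∑ B, β B = 1)
    (hcompat : ∀ P, α P ≠ 0 → 0 < zeta P β)
    (Eμ2 : (Fin n → PauliBasis) → Finset (Fin n) → Finset (Fin n) → ℝ)
    (hEμ2 : ∀ (P Q : Fin n → PauliOp), ∀ B ∈ Lift P ∩ Lift Q,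
        Eμ2 B (psupp P) (psupp Q) = trPQ P Q) :
    ∑ B, β B * ∑ P, ∑ Q,
        α P * α Q * ((if B ∈ Lift P then (1:ℝ) else 0) / zeta P β)
          * ((if B ∈ Lift Q then (1:ℝ) else 0) / zeta Q β)
          * Eμ2 B (psupp P) (psupp Q)
      = ∑ P, ∑ Q, α P * α Q *
          ((∑ B ∈ Lift P ∩ Lift Q, β B) / (zeta P β * zeta Q β)) * trPQ P Q :=
  statement1_general β α trPQ Eμ2 hEμ2
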